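/- arXiv:2012.01453 — 2 statements merged into one kernel-verified Lean document; each statement's English description precedes it below -/
import Mathlib

section
/- For every integer s ≥ 2 and every n ≥ 0, the cardinality |T_n| is given by the closed formula |T_n| = (s^n / (2·√(1 − 1/s))) · [ (1 + √(1 − 1/s))^{n+1} − (1 − √(1 − 1/s))^{n+1} ], as an identity of real numbers. -/
/-!
Splitting off the first letter, a letter `x ∈ Σ_*` can be put in front of `u ∈ T_n` unless
`x > 0` and `u₀ = -x`, so `u` has `2s - [u₀ < 0]` admissible first letters. The words of
`T_{n+1}` starting with a negative letter are exactly the `s · |T_n|` words `x :: u` with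
`x < 0`, hence `|T_{n+2}| = 2s |T_{n+1}| - s |T_n|`, with `|T_0| = 1` and `|T_1| = 2s`.
The characteristic roots of this recurrence are `s (1 ± r)` with `r = √(1 - 1/s)`, and the
closed form is the matching Binet formula.
-/

open Finset

/-- `T_n`: the set of strings `t : Fin n → ℤ` with all letters in
`Σ_* = {m : 1 ≤ |m| ≤ s}` such that no letter `t_j > 0` is immediately followed by
`t_{j+1} = −t_j`. -/
noncomputable def Tset (s n : ℕ) : Finset (Fin n → ℤ) :=
  letI := Classical.decPred
    (fun t : Fin n → ℤ => (∀ i, t i ≠ 0) ∧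
      ∀ (i : Fin n) (h : (i : ℕ) + 1 < n), ¬(0 < t i ∧ t ⟨(i : ℕ) + 1, h⟩ = -t i))
  (Fintype.piFinset fun _ : Fin n => Finset.Icc (-(s : ℤ)) (s : ℤ)).filter
    (fun t => (∀ i, t i ≠ 0) ∧
      ∀ (i : Fin n) (h : (i : ℕ) + 1 < n), ¬(0 < t i ∧ t ⟨(i : ℕ) + 1, h⟩ = -t i))

namespace Tset

variable {s n : ℕ}

lemma mem_iff {t : Fin n → ℤ} :
    t ∈ Tset s n ↔ (∀ i, t i ∈ Icc (-(s : ℤ)) s) ∧ (∀ i, t i ≠ 0) ∧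
      ∀ (i : Fin n) (h : (i : ℕ) + 1 < n), ¬(0 < t i ∧ t ⟨(i : ℕ) + 1, h⟩ = -t i) := by
  classical
  simp [Tset, Fintype.mem_piFinset]

noncomputable def heads (s n : ℕ) (u : Fin n → ℤ) : Finset ℤ :=
  {x ∈ Icc (-(s : ℤ)) s | x ≠ 0 ∧ ∀ h : 0 < n, ¬(0 < x ∧ u ⟨0, h⟩ = -x)}

lemma cons_mem_iff {x : ℤ} {u : Fin n → ℤ} :
    Fin.cons x u ∈ Tset s (n + 1) ↔ u ∈ Tset s n ∧ x ∈ heads s n u := by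
  simp only [mem_iff, heads, mem_filter, Fin.forall_fin_succ, Fin.cons_zero, Fin.cons_succ]
  constructor
  · rintro ⟨⟨hx, hu⟩, ⟨hx0, hu0⟩, hx1, hu1⟩
    exact ⟨⟨hu, hu0, fun i hi => hu1 i (Nat.succ_lt_succ hi)⟩, hx, hx0,
      fun hn => hx1 (Nat.succ_lt_succ hn)⟩
  · rintro ⟨⟨hu, hu0, hu1⟩, hx, hx0, hx1⟩
    exact ⟨⟨hx, hu⟩, ⟨hx0, hu0⟩, fun h => hx1 (Nat.lt_of_succ_lt_succ h),
      fun i hi => hu1 i (Nat.lt_of_succ_lt_succ hi)⟩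

lemma card_filter_succ (p : ℤ → Prop) [DecidablePred p] :
    #{t ∈ Tset s (n + 1) | p (t 0)} = ∑ u ∈ Tset s n, #{x ∈ heads s n u | p x} := by
  rw [← card_sigma]
  refine card_nbij' (fun t => ⟨Fin.tail t, t 0⟩) (fun q => Fin.cons q.2 q.1) ?_ ?_ ?_ ?_
  · intro t ht
    simp only [coe_filter, Set.mem_ofPred_eq] at ht
    rw [← Fin.cons_self_tail t, cons_mem_iff] at ht
    simp only [coe_sigma, Set.mem_sigma_iff, coe_filter, Set.mem_ofPred_eq, mem_coe]
    exact ⟨ht.1.1, ht.1.2, by simpa using ht.2⟩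
  · rintro ⟨u, x⟩ hq
    simp only [coe_sigma, Set.mem_sigma_iff, coe_filter, Set.mem_ofPred_eq, mem_coe] at hq
    simp only [coe_filter, Set.mem_ofPred_eq, cons_mem_iff, Fin.cons_zero]
    exact ⟨⟨hq.1, hq.2.1⟩, hq.2.2⟩
  · intro t _
    simp
  · intro q _
    simp

lemma card_succ : #(Tset s (n + 1)) = ∑ u ∈ Tset s n, #(heads s n u) := by
  simpa using card_filter_succ (s := s) (n := n) (fun _ => True)

lemma card_filter_heads_neg (u : Fin n → ℤ) : #{x ∈ heads s n u | x < 0} = s := by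
  have : {x ∈ heads s n u | x < 0} = Icc (-(s : ℤ)) (-1) := by
    ext x
    simp only [heads, mem_filter, mem_Icc]
    constructor
    · rintro ⟨⟨⟨hx, -⟩, -⟩, hx0⟩
      exact ⟨hx, by omega⟩
    · rintro ⟨hx, hx0⟩
      exact ⟨⟨⟨hx, by omega⟩, by omega, fun _ h => by omega⟩, by omega⟩
  simp [this]

lemma card_heads_add_ite {u : Fin n → ℤ} (hu : u ∈ Tset s n) :
    #(heads s n u) + (if ∃ h : 0 < n, u ⟨0, h⟩ < 0 then 1 else 0) = 2 * s := by
  have hIcc : #((Icc (-(s : ℤ)) s).erase 0) = 2 * s := by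
    rw [card_erase_of_mem (by simp), Int.card_Icc]
    omega
  split_ifs with hneg
  · obtain ⟨hn, hu0⟩ := hneg
    have hbd := mem_Icc.mp ((mem_iff.mp hu).1 ⟨0, hn⟩)
    have : heads s n u = ((Icc (-(s : ℤ)) s).erase 0).erase (-u ⟨0, hn⟩) := by
      ext x
      simp only [heads, mem_filter, mem_erase, mem_Icc]
      constructor
      · rintro ⟨hx, hx0, hx1⟩
        exact ⟨fun hx' => hx1 hn ⟨by omega, by omega⟩, hx0, hx⟩
      · rintro ⟨hx', hx0, hx⟩
        exact ⟨hx, hx0, fun _ h => hx' (by omega)⟩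
    rw [this, card_erase_of_mem (by simp only [mem_erase, mem_Icc]; omega), hIcc]
    omega
  · push Not at hneg
    have : heads s n u = (Icc (-(s : ℤ)) s).erase 0 := by
      ext x
      simp only [heads, mem_filter, mem_erase, mem_Icc]
      constructor
      · rintro ⟨hx, hx0, -⟩
        exact ⟨hx0, hx⟩
      · rintro ⟨hx0, hx⟩
        exact ⟨hx, hx0, fun hn h => (hneg hn).not_gt (by omega)⟩
    rw [this, hIcc, add_zero]

lemma card_zero : #(Tset s 0) = 1 :=
  card_eq_one.mpr ⟨Fin.elim0, eq_singleton_iff_unique_mem.mpr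
    ⟨mem_iff.mpr ⟨fun i => i.elim0, fun i => i.elim0, fun i => i.elim0⟩,
      fun _ _ => Subsingleton.elim _ _⟩⟩

lemma card_one : #(Tset s 1) = 2 * s := by
  rw [card_succ, sum_congr rfl fun u hu => by simpa using card_heads_add_ite hu, sum_const,
    card_zero, one_smul]

lemma card_add_two : #(Tset s (n + 2)) + s * #(Tset s n) = 2 * s * #(Tset s (n + 1)) := by
  have hneg : s * #(Tset s n) = ∑ u ∈ Tset s (n + 1), if u 0 < 0 then 1 else 0 := by
    rw [← card_filter, card_filter_succ (fun x => x < 0)]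
    simp [card_filter_heads_neg, mul_comm]
  calc #(Tset s (n + 2)) + s * #(Tset s n)
      = ∑ u ∈ Tset s (n + 1), (#(heads s (n + 1) u) + if u 0 < 0 then 1 else 0) := by
        rw [card_succ, hneg, sum_add_distrib]
    _ = ∑ _u ∈ Tset s (n + 1), 2 * s :=
        sum_congr rfl fun u hu => by simpa using card_heads_add_ite hu
    _ = 2 * s * #(Tset s (n + 1)) := by rw [sum_const, smul_eq_mul, mul_comm]

end Tset

noncomputable def binet (s r : ℝ) (n : ℕ) : ℝ :=
  s ^ n / (2 * r) * ((1 + r) ^ (n + 1) - (1 - r) ^ (n + 1))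

section binet

variable {s r : ℝ}

lemma binet_zero (hr : r ≠ 0) : binet s r 0 = 1 := by
  simp only [binet]
  field_simp
  ring

lemma binet_one (hr : r ≠ 0) : binet s r 1 = 2 * s := by
  simp only [binet]
  field_simp
  ring

/-- `s (1 ± r)` are the roots of `x² = 2 s x - s` exactly when `s r² = s - 1`. -/
lemma binet_add_two (hr : s * r ^ 2 = s - 1) (n : ℕ) :
    binet s r (n + 2) = 2 * s * binet s r (n + 1) - s * binet s r n := by
  simp only [binet]
  linear_combination s ^ n / (2 * r) * s * ((1 + r) ^ (n + 1) - (1 - r) ^ (n + 1)) * hr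

end binet

theorem stmt_9 (s : ℕ) (hs : 2 ≤ s) (n : ℕ) :
    ((Tset s n).card : ℝ)
      = (s : ℝ) ^ n / (2 * Real.sqrt (1 - 1 / (s : ℝ)))
        * ((1 + Real.sqrt (1 - 1 / (s : ℝ))) ^ (n + 1)
            - (1 - Real.sqrt (1 - 1 / (s : ℝ))) ^ (n + 1)) := by
  have hs' : (2 : ℝ) ≤ s := by exact_mod_cast hs
  have hpos : 0 < 1 - 1 / (s : ℝ) := by
    rw [sub_pos, div_lt_one (by linarith)]
    linarith
  set r := √(1 - 1 / (s : ℝ))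
  have hr0 : r ≠ 0 := (Real.sqrt_pos.mpr hpos).ne'
  have hr : (s : ℝ) * r ^ 2 = s - 1 := by
    rw [Real.sq_sqrt hpos.le]
    field_simp
  change _ = binet s r n
  induction n using Nat.twoStepInduction with
  | zero => simp [Tset.card_zero, binet_zero hr0]
  | one => simp [Tset.card_one, binet_one hr0]
  | more n ih₀ ih₁ =>
    have hrec : ((Tset s (n + 2)).card : ℝ) + s * (Tset s n).card
        = 2 * s * (Tset s (n + 1)).card := by exact_mod_cast Tset.card_add_two
    rw [binet_add_two hr, ← ih₀, ← ih₁]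
    linarith
end

section
/- For every integer s ≥ 2 and every n ≥ 0, one has the identity of real numbers |T_n| / (Σ_{k=0}^{n} |T_k|) = √((s−1)/s) · (1 − (r_−/r_+)^{n+1}) / (1 + (r_−/r_+)^{n+1} − 2·r_+^{−(n+1)}), where r_± = s·(1 ± √(1 − 1/s)). In particular, this ratio converges to √((s−1)/s) as n → ∞. -/
open Finset Filter Topology

/-! Appending a letter `x` to a string of `T_n` keeps it in `T_{n+1}` unless the string ends in a
positive letter `y` and `x = -y`. So the `s·|T_n|` strings of `T_{n+1}` ending in a positive letter
have `2s - 1` extensions and all others `2s`, giving `|T_{n+2}| = 2s|T_{n+1}| - s|T_n|`. The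
characteristic roots are `r_± = s(1 ± d)` with `d = √(1 - 1/s)`, so
`2sd·|T_n| = r_+^{n+1} - r_-^{n+1}` and `2(s-1)·∑_{k ≤ n} |T_k| = r_+^{n+1} + r_-^{n+1} - 2`;
dividing by `r_+^{n+1}` gives the formula, and `r_- / r_+ ∈ (0, 1)`, `r_+ > 1` give the limit. -/

noncomputable def alphabet (s : ℕ) : Finset ℤ := (Finset.Icc (-(s : ℤ)) s).erase 0

theorem mem_alphabet {s : ℕ} {x : ℤ} : x ∈ alphabet s ↔ x ≠ 0 ∧ -(s : ℤ) ≤ x ∧ x ≤ s := by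
  simp [alphabet]

theorem card_alphabet (s : ℕ) : #(alphabet s) = 2 * s := by
  rw [alphabet, card_erase_of_mem (by simp), Int.card_Icc]
  omega

theorem mem_Tset {s n : ℕ} {t : Fin n → ℤ} :
    t ∈ Tset s n ↔ (∀ i, t i ∈ alphabet s) ∧
      ∀ (i : Fin n) (h : (i : ℕ) + 1 < n), ¬(0 < t i ∧ t ⟨(i : ℕ) + 1, h⟩ = -t i) := by
  simp only [Tset, mem_filter, Fintype.mem_piFinset, mem_alphabet, ← forall_and]
  grind

def AdmissibleAfter {n : ℕ} (u : Fin n → ℤ) (x : ℤ) : Prop :=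
  ∀ i : Fin n, (i : ℕ) + 1 = n → ¬(0 < u i ∧ x = -u i)

instance {n : ℕ} (u : Fin n → ℤ) (x : ℤ) : Decidable (AdmissibleAfter u x) := by
  unfold AdmissibleAfter
  infer_instance

theorem admissibleAfter_of_pos {n : ℕ} {u : Fin n → ℤ} {x : ℤ} (hx : 0 < x) :
    AdmissibleAfter u x :=
  fun _ _ h => by omega

theorem admissibleAfter_iff {n : ℕ} {u : Fin (n + 1) → ℤ} {x : ℤ} :
    AdmissibleAfter u x ↔ ¬(0 < u (Fin.last n) ∧ x = -u (Fin.last n)) :=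
  ⟨fun h => h _ rfl, fun h i hi => by rwa [show i = Fin.last n from Fin.ext (by simp; omega)]⟩

theorem snoc_apply_mk {n : ℕ} (u : Fin n → ℤ) (x : ℤ) (k : ℕ) (hk : k < n + 1) :
    (Fin.snoc u x : Fin (n + 1) → ℤ) ⟨k, hk⟩ = if h : k < n then u ⟨k, h⟩ else x := by
  simp [Fin.snoc]

theorem snoc_mem_Tset_iff {s n : ℕ} {u : Fin n → ℤ} {x : ℤ} :
    Fin.snoc u x ∈ Tset s (n + 1) ↔ u ∈ Tset s n ∧ x ∈ alphabet s ∧ AdmissibleAfter u x := by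
  simp only [mem_Tset, Fin.forall_fin_succ', Fin.snoc_castSucc, Fin.snoc_last, snoc_apply_mk,
    Fin.val_castSucc, Fin.val_last, AdmissibleAfter]
  constructor
  · rintro ⟨⟨hu, hx⟩, hpair, -⟩
    refine ⟨⟨hu, fun i h => by simpa [h] using hpair i (by omega)⟩, hx, fun i hi => ?_⟩
    simpa [hi] using hpair i (by omega)
  · rintro ⟨⟨hu, hpair⟩, hx, hlast⟩
    refine ⟨⟨hu, hx⟩, fun i h => ?_, fun h => by omega⟩
    split_ifs with hi
    · exact hpair i hi
    · exact hlast i (by omega)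

theorem card_filter_Tset_succ (s n : ℕ) (P : ℤ → Prop) [DecidablePred P] :
    #{t ∈ Tset s (n + 1) | P (t (Fin.last n))} =
      ∑ u ∈ Tset s n, #{x ∈ alphabet s | P x ∧ AdmissibleAfter u x} := by
  rw [← card_sigma]
  refine card_nbij' (fun t => ⟨Fin.init t, t (Fin.last n)⟩) (fun p => Fin.snoc p.1 p.2)
    ?_ ?_ ?_ ?_
  · intro t ht
    simp only [coe_filter, Set.mem_ofPred_eq] at ht
    rw [← Fin.snoc_init_self t, snoc_mem_Tset_iff, Fin.snoc_last] at ht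
    simp [ht]
  · rintro ⟨u, x⟩ hp
    simp only [coe_sigma, Set.mem_sigma_iff, mem_coe, mem_filter] at hp
    simp [snoc_mem_Tset_iff, hp]
  · intro t _
    exact Fin.snoc_init_self t
  · rintro ⟨u, x⟩ _
    simp

theorem card_Tset_succ (s n : ℕ) :
    #(Tset s (n + 1)) = ∑ u ∈ Tset s n, #{x ∈ alphabet s | AdmissibleAfter u x} := by
  simpa using card_filter_Tset_succ s n (fun _ => True)

theorem card_Tset_zero (s : ℕ) : #(Tset s 0) = 1 := by
  rw [card_eq_one]
  exact ⟨Fin.elim0, eq_singleton_iff_unique_mem.mpr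
    ⟨mem_Tset.mpr ⟨(Fin.elim0 ·), (Fin.elim0 ·)⟩, fun _ _ => funext (Fin.elim0 ·)⟩⟩

theorem card_Tset_one (s : ℕ) : #(Tset s 1) = 2 * s := by
  simp [card_Tset_succ, card_Tset_zero, AdmissibleAfter, card_alphabet]

theorem card_filter_pos_last (s n : ℕ) :
    #{t ∈ Tset s (n + 1) | 0 < t (Fin.last n)} = s * #(Tset s n) := by
  have hpos (u : Fin n → ℤ) :
      {x ∈ alphabet s | 0 < x ∧ AdmissibleAfter u x} = Finset.Icc 1 (s : ℤ) := by
    ext x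
    simp only [mem_filter, mem_alphabet, Finset.mem_Icc]
    constructor
    · rintro ⟨⟨-, -, hxs⟩, hx, -⟩
      exact ⟨hx, hxs⟩
    · rintro ⟨hx, hxs⟩
      exact ⟨⟨by omega, by omega, hxs⟩, by omega, admissibleAfter_of_pos (by omega)⟩
  simp [card_filter_Tset_succ, hpos, mul_comm]

theorem card_admissibleAfter_add_ite {s n : ℕ} {u : Fin (n + 1) → ℤ}
    (hu : u (Fin.last n) ∈ alphabet s) :
    #{x ∈ alphabet s | AdmissibleAfter u x} + (if 0 < u (Fin.last n) then 1 else 0) = 2 * s := by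
  simp only [admissibleAfter_iff]
  split_ifs with hpos
  · have : -u (Fin.last n) ∈ alphabet s := by rw [mem_alphabet] at hu ⊢; omega
    rw [← card_alphabet, ← card_erase_add_one this, ← filter_ne']
    simp [hpos]
  · simp [hpos, card_alphabet]

theorem card_Tset_add_two (s n : ℕ) :
    #(Tset s (n + 2)) + s * #(Tset s n) = 2 * s * #(Tset s (n + 1)) := by
  rw [card_Tset_succ, ← card_filter_pos_last, card_filter, ← sum_add_distrib, mul_comm,
    ← smul_eq_mul, ← sum_const]
  refine sum_congr rfl fun u hu => card_admissibleAfter_add_ite ?_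
  rw [← Fin.snoc_init_self u, snoc_mem_Tset_iff] at hu
  simpa using hu.2.1

section Recurrence

variable {R : Type*} [CommRing R] {a : ℕ → R} {p q : R}

theorem sub_mul_eq_pow_sub_pow_of_recurrence (h0 : a 0 = 1) (h1 : a 1 = p + q)
    (hrec : ∀ n, a (n + 2) = (p + q) * a (n + 1) - p * q * a n) (n : ℕ) :
    (p - q) * a n = p ^ (n + 1) - q ^ (n + 1) := by
  induction n using Nat.twoStepInduction with
  | zero => simp [h0]
  | one => rw [h1]; ring
  | more n ih₀ ih₁ => linear_combination (p + q) * ih₁ - p * q * ih₀ + (p - q) * hrec n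

theorem mul_sum_range_of_recurrence (h0 : a 0 = 1) (h1 : a 1 = p + q)
    (hrec : ∀ n, a (n + 2) = (p + q) * a (n + 1) - p * q * a n) (n : ℕ) :
    (1 - p) * (1 - q) * ∑ k ∈ range (n + 1), a k = 1 - a (n + 1) + p * q * a n := by
  induction n with
  | zero => simp [h0, h1]; ring
  | succ n ih => rw [sum_range_succ, hrec]; linear_combination ih

end Recurrence

theorem div_sum_range_eq_of_recurrence {s d : ℝ} (hs : s ≠ 0) (hd₀ : d ≠ 0)
    (hd : s * d ^ 2 = s - 1) {a : ℕ → ℝ} (h0 : a 0 = 1) (h1 : a 1 = 2 * s)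
    (hrec : ∀ n, a (n + 2) = 2 * s * a (n + 1) - s * a n) (n : ℕ) :
    a n / ∑ k ∈ range (n + 1), a k
      = d * ((1 - (s * (1 - d) / (s * (1 + d))) ^ (n + 1))
          / (1 + (s * (1 - d) / (s * (1 + d))) ^ (n + 1) - 2 * ((s * (1 + d)) ^ (n + 1))⁻¹)) := by
  have hpq : s * (1 + d) + s * (1 - d) = 2 * s := by ring
  have hpq' : s * (1 + d) * (s * (1 - d)) = s := by linear_combination (-s) * hd
  have hP : (s * (1 + d)) ^ (n + 1) ≠ 0 :=
    pow_ne_zero _ (mul_ne_zero hs fun h => by rw [show d = -1 by linarith] at hd; linarith)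
  rw [← hpq] at h1
  replace hrec : ∀ n, a (n + 2) = (s * (1 + d) + s * (1 - d)) * a (n + 1)
      - s * (1 + d) * (s * (1 - d)) * a n := by
    simpa only [hpq, hpq'] using hrec
  have ha := sub_mul_eq_pow_sub_pow_of_recurrence h0 h1 hrec
  have hA : a n = ((s * (1 + d)) ^ (n + 1) - (s * (1 - d)) ^ (n + 1)) / (2 * s * d) := by
    rw [eq_div_iff (by positivity), ← ha n]; ring
  have hS : ∑ k ∈ range (n + 1), a k
      = ((s * (1 + d)) ^ (n + 1) + (s * (1 - d)) ^ (n + 1) - 2) / (2 * s * d ^ 2) := by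
    rw [eq_div_iff (by positivity)]
    apply mul_left_cancel₀ (mul_ne_zero hs hd₀)
    -- modulo `hd`: `(1 - r₊)(1 - r₋) = -s d²` and `r₊(1 - r₋) = -r₋(1 - r₊) = s d`
    linear_combination (-2 * s * d) * mul_sum_range_of_recurrence h0 h1 hrec n + ha (n + 1)
      - s * (1 + d) * (s * (1 - d)) * ha n + (2 * s * d * (1 - s) * ∑ k ∈ range (n + 1), a k
        + s * ((s * (1 + d)) ^ (n + 1) - (s * (1 - d)) ^ (n + 1))) * hd
  rw [hA, hS, div_pow]
  generalize (s * (1 + d)) ^ (n + 1) = P at hP ⊢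
  generalize (s * (1 - d)) ^ (n + 1) = Q
  have hnum : 1 - Q / P = (P - Q) / P := by field_simp
  have hden : 1 + Q / P - 2 * P⁻¹ = (P + Q - 2) / P := by field_simp
  have hd' : 2 * s * d ^ 2 / (2 * s * d) = d := by field_simp
  rw [hnum, hden, div_div_div_cancel_right₀ hP, div_div_div_eq, mul_comm (2 * s * d),
    ← div_mul_div_comm, hd', mul_comm]

theorem tendsto_mul_one_sub_pow_div {d ρ p : ℝ} (hρ : |ρ| < 1) (hp : 1 < p) :
    Tendsto (fun n : ℕ => d * ((1 - ρ ^ (n + 1)) / (1 + ρ ^ (n + 1) - 2 * (p ^ (n + 1))⁻¹)))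
      atTop (𝓝 d) := by
  have hρ' : Tendsto (fun n : ℕ => ρ ^ (n + 1)) atTop (𝓝 0) :=
    (tendsto_add_atTop_iff_nat 1).mpr (tendsto_pow_atTop_nhds_zero_of_abs_lt_one hρ)
  have hp' : Tendsto (fun n : ℕ => (p ^ (n + 1))⁻¹) atTop (𝓝 0) :=
    tendsto_inv_atTop_zero.comp <|
      (tendsto_add_atTop_iff_nat 1).mpr (tendsto_pow_atTop_atTop_of_one_lt hp)
  have h1 : Tendsto (fun _ : ℕ => (1 : ℝ)) atTop (𝓝 1) := tendsto_const_nhds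
  simpa using ((h1.sub hρ').div ((h1.add hρ').sub (hp'.const_mul 2)) (by norm_num)).const_mul d

theorem stmt_12 (s : ℕ) (hs : 2 ≤ s) :
    (∀ n : ℕ,
      ((Tset s n).card : ℝ) / (∑ k ∈ Finset.range (n + 1), ((Tset s k).card : ℝ))
        = Real.sqrt (((s : ℝ) - 1) / s)
          * ((1 - (((s : ℝ) * (1 - Real.sqrt (1 - 1 / (s : ℝ))))
                    / ((s : ℝ) * (1 + Real.sqrt (1 - 1 / (s : ℝ))))) ^ (n + 1))
            / (1 + (((s : ℝ) * (1 - Real.sqrt (1 - 1 / (s : ℝ))))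
                    / ((s : ℝ) * (1 + Real.sqrt (1 - 1 / (s : ℝ))))) ^ (n + 1)
                - 2 * (((s : ℝ) * (1 + Real.sqrt (1 - 1 / (s : ℝ)))) ^ (n + 1))⁻¹))) ∧
    Filter.Tendsto
      (fun n : ℕ =>
        ((Tset s n).card : ℝ) / (∑ k ∈ Finset.range (n + 1), ((Tset s k).card : ℝ)))
      Filter.atTop (nhds (Real.sqrt (((s : ℝ) - 1) / s))) := by
  have hs₁ : (1 : ℝ) < s := by exact_mod_cast hs
  have hs₀ : (s : ℝ) ≠ 0 := by positivity
  set d := Real.sqrt (1 - 1 / (s : ℝ))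
  have hd₀ : 0 < d := Real.sqrt_pos.mpr (by rw [sub_pos, div_lt_one (by positivity)]; exact hs₁)
  have hd : (s : ℝ) * d ^ 2 = s - 1 := by
    rw [Real.sq_sqrt (by rw [sub_nonneg, div_le_one (by positivity)]; exact hs₁.le)]
    field_simp
  have hsqrt : Real.sqrt (((s : ℝ) - 1) / s) = d := by congr 1; field_simp
  have hrec (n : ℕ) : ((Tset s (n + 2)).card : ℝ)
      = 2 * s * (Tset s (n + 1)).card - s * (Tset s n).card := by
    have := congrArg (Nat.cast : ℕ → ℝ) (card_Tset_add_two s n)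
    push_cast at this
    linarith
  have key := div_sum_range_eq_of_recurrence (a := fun n => ((Tset s n).card : ℝ)) hs₀ hd₀.ne' hd
    (by simp [card_Tset_zero]) (by simp [card_Tset_one]) hrec
  refine ⟨fun n => by rw [key, hsqrt], ?_⟩
  have hρ : |s * (1 - d) / (s * (1 + d))| < 1 := by
    rw [mul_div_mul_left _ _ hs₀, abs_div, abs_of_pos (by positivity : 0 < 1 + d),
      div_lt_one (by positivity), abs_lt]
    constructor <;> linarith
  rw [hsqrt]
  exact (tendsto_mul_one_sub_pow_div hρ (by nlinarith)).congr fun n => (key n).symm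
end
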